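/- Every ideal of T_n is of the form I[α] = {x ∈ T_n : x_{ij} = 0 whenever i > α(j)} for some order-preserving function α : {0,1,…,n} → {0,1,…,n} with α(k) ≤ k for all k. -/

import Mathlib

/-- The set of upper triangular `n × n` complex matrices. -/
def UT (n : ℕ) : Set (Matrix (Fin n) (Fin n) ℂ) :=
  {M | ∀ i j : Fin n, j < i → M i j = 0}

/-- `I` is a two-sided ideal of the (sub)algebra with underlying set `A`. -/
def IsIdealIn {n : ℕ} (A I : Set (Matrix (Fin n) (Fin n) ℂ)) : Prop :=
  I ⊆ A ∧ (0 : Matrix (Fin n) (Fin n) ℂ) ∈ I ∧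
    (∀ x ∈ I, ∀ y ∈ I, x + y ∈ I) ∧
    (∀ c : ℂ, ∀ x ∈ I, c • x ∈ I) ∧
    (∀ a ∈ A, ∀ x ∈ I, a * x ∈ I ∧ x * a ∈ I)


/-!
An ideal `I` of `T_n` is a sum of the matrix units it contains: sandwiching an element of `I`
between matrix units of `T_n` shows that a nonzero `(i₀, j₀)` entry puts every `E_{ij}` with
`i ≤ i₀` and `j₀ ≤ j` into `I`. So `I` is determined by the height of its support in each column,
which is at most the column index and, by the same sandwiching, increases from left to right.
-/

open Matrix

lemma Fin.monotone_cons_bot {α : Type*} [Preorder α] [OrderBot α] {n : ℕ} {f : Fin n → α}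
    (hf : Monotone f) : Monotone (Fin.cons (α := fun _ => α) ⊥ f) := by
  intro a b hab
  cases a using Fin.cases with
  | zero => exact bot_le
  | succ a =>
    cases b using Fin.cases with
    | zero => exact absurd hab (Fin.succ_pos a).not_ge
    | succ b => simpa using hf (Fin.succ_le_succ_iff.mp hab)

lemma single_mem_UT {n : ℕ} {i j : Fin n} (h : i ≤ j) (c : ℂ) : single i j c ∈ UT n :=
  fun _ _ hba => single_apply_of_ne _ _ _ _ _ <| by rintro ⟨rfl, rfl⟩; exact h.not_gt hba

namespace IsIdealIn

variable {n : ℕ} {I : Set (Matrix (Fin n) (Fin n) ℂ)}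

lemma sum_mem {A : Set (Matrix (Fin n) (Fin n) ℂ)} (hI : IsIdealIn A I) {ι : Type*}
    (s : Finset ι) {f : ι → Matrix (Fin n) (Fin n) ℂ} (hf : ∀ b ∈ s, f b ∈ I) :
    ∑ b ∈ s, f b ∈ I :=
  Finset.sum_induction f (· ∈ I) (fun a b ha hb => hI.2.2.1 a ha b hb) hI.2.1 hf

lemma single_mem (hI : IsIdealIn (UT n) I) {x : Matrix (Fin n) (Fin n) ℂ} (hx : x ∈ I)
    {i₀ j₀ i j : Fin n} (hne : x i₀ j₀ ≠ 0) (hi : i ≤ i₀) (hj : j₀ ≤ j) (c : ℂ) :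
    single i j c ∈ I := by
  have hmem : single i i₀ (c / x i₀ j₀) * x * single j₀ j 1 ∈ I :=
    (hI.2.2.2.2 _ (single_mem_UT hj 1) _ (hI.2.2.2.2 _ (single_mem_UT hi _) x hx).1).2
  rwa [single_mul_mul_single, mul_one, div_mul_cancel₀ c hne] at hmem

lemma mem_of_forall_single_mem (hI : IsIdealIn (UT n) I) {x : Matrix (Fin n) (Fin n) ℂ}
    (hx : ∀ i j, single i j (x i j) ∈ I) : x ∈ I := by
  rw [matrix_eq_sum_single x]
  exact hI.sum_mem _ fun i _ => hI.sum_mem _ fun j _ => hx i j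

end IsIdealIn

open Classical in
noncomputable def colHeight {n : ℕ} (I : Set (Matrix (Fin n) (Fin n) ℂ)) (j : Fin n) : ℕ :=
  ({i | ∃ x ∈ I, x i j ≠ 0} : Finset (Fin n)).sup fun i => (i : ℕ) + 1

section colHeight

variable {n : ℕ} {I : Set (Matrix (Fin n) (Fin n) ℂ)}

lemma lt_colHeight {x : Matrix (Fin n) (Fin n) ℂ} (hx : x ∈ I) {i j : Fin n} (h : x i j ≠ 0) :
    (i : ℕ) < colHeight I j :=
  Nat.lt_of_succ_le <| Finset.le_sup (f := fun i : Fin n => (i : ℕ) + 1) (by simpa using ⟨x, hx, h⟩)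

lemma exists_of_lt_colHeight {i j : Fin n} (h : (i : ℕ) < colHeight I j) :
    ∃ i₀, i ≤ i₀ ∧ ∃ x ∈ I, x i₀ j ≠ 0 := by
  obtain ⟨i₀, hi₀, hle⟩ := (Finset.lt_sup_iff (f := fun i : Fin n => (i : ℕ) + 1)).mp h
  exact ⟨i₀, Fin.le_def.mpr (Nat.lt_succ_iff.mp hle), by simpa using hi₀⟩

lemma colHeight_le_succ (hI : I ⊆ UT n) (j : Fin n) : colHeight I j ≤ j + 1 :=
  Finset.sup_le fun i hi => by
    obtain ⟨x, hx, hne⟩ := by simpa using hi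
    exact Nat.succ_le_succ (not_lt.mp fun hji => hne (hI hx i j hji))

lemma colHeight_mono (hI : IsIdealIn (UT n) I) : Monotone (colHeight I) := fun j j' hj =>
  Finset.sup_le fun i hi => by
    obtain ⟨x, hx, hne⟩ := by simpa using hi
    have hsingle := hI.single_mem hx hne le_rfl hj 1
    exact Nat.succ_le_of_lt (lt_colHeight hsingle (by simp))

lemma mem_iff_colHeight (hI : IsIdealIn (UT n) I) (x : Matrix (Fin n) (Fin n) ℂ) :
    x ∈ I ↔ x ∈ UT n ∧ ∀ i j : Fin n, colHeight I j ≤ i → x i j = 0 := by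
  refine ⟨fun hx => ⟨hI.1 hx, fun i j hij => not_not.mp fun hne => ?_⟩, fun ⟨_, hx⟩ => ?_⟩
  · exact hij.not_gt (lt_colHeight hx hne)
  · refine hI.mem_of_forall_single_mem fun i j => ?_
    by_cases hij : x i j = 0
    · simpa [hij] using hI.2.1
    · obtain ⟨i₀, hi, x₀, hx₀, hne⟩ := exists_of_lt_colHeight (not_le.mp (mt (hx i j) hij))
      exact hI.single_mem hx₀ hne hi le_rfl _

end colHeight

/- Rows and columns `Fin n` stand for `{1,…,n}` via `i ↦ i + 1`, so `α (j + 1) = colHeight I j`. -/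
/-- Every ideal of `T_n` is of the form
`I[α] = {x ∈ T_n : x i j = 0 whenever i > α(j)}` for some order-preserving
`α : {0,…,n} → {0,…,n}` with `α(k) ≤ k`.  (Matrix rows/columns are indexed by
`Fin n`, thought of as `{1,…,n}` via `i ↦ i+1`.) -/
theorem stmt_4 (n : ℕ) (I : Set (Matrix (Fin n) (Fin n) ℂ))
    (hI : IsIdealIn (UT n) I) :
    ∃ α : Fin (n + 1) → Fin (n + 1), Monotone α ∧ (∀ k, α k ≤ k) ∧
      I = {x | x ∈ UT n ∧
        ∀ i j : Fin n, (α j.succ : ℕ) < (i : ℕ) + 1 → x i j = 0} := by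
  let height : Fin n → Fin (n + 1) := fun j =>
    ⟨colHeight I j, Nat.lt_succ_of_le ((colHeight_le_succ hI.1 j).trans j.isLt)⟩
  refine ⟨Fin.cons ⊥ height, Fin.monotone_cons_bot fun j j' hj => colHeight_mono hI hj,
    Fin.cases bot_le fun j => Fin.le_def.mpr (colHeight_le_succ hI.1 j), ?_⟩
  ext x
  simp [height, mem_iff_colHeight hI]
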